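/- Let (π : A → B, ⊞, 0) be as in the context (an abelian-group structure on π in the comma category of unital bialgebras with divisions over B). Then for all x, x' ∈ F(A): the element x⊗x' lies in A⊗_B A and x·x' = ⊞(x⊗x'); F(A) is closed under the multiplication and under both divisions of A; and the multiplication of A restricted to F(A) is commutative and associative. -/

import Mathlib

open TensorProduct

namespace FormalLoops

variable (k : Type*) [Field k]

/-- A unital, not necessarily associative, bialgebra with left and right divisions:
a cocommutative coassociative counital coalgebra together with a bilinear unital
multiplication and bilinear left/right divisions which are coalgebra morphisms and
satisfy the division cancellation laws (in Sweedler form). -/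
structure DivBialg (A : Type*) [AddCommGroup A] [Module k A] where
  Δ : A →ₗ[k] A ⊗[k] A
  ε : A →ₗ[k] k
  mul : A →ₗ[k] A →ₗ[k] A
  one : A
  ld : A →ₗ[k] A →ₗ[k] A
  rd : A →ₗ[k] A →ₗ[k] A
  coassoc : ∀ u : A, (TensorProduct.assoc k A A A) ((Δ.rTensor A) (Δ u)) = (Δ.lTensor A) (Δ u)
  counit_left : ∀ u : A, (TensorProduct.lid k A) ((ε.rTensor A) (Δ u)) = u
  counit_right : ∀ u : A, (TensorProduct.rid k A) ((ε.lTensor A) (Δ u)) = u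
  cocomm : ∀ u : A, (TensorProduct.comm k A A) (Δ u) = Δ u
  Δ_one : Δ one = one ⊗ₜ[k] one
  ε_one : ε one = 1
  one_mul : ∀ u, mul one u = u
  mul_one : ∀ u, mul u one = u
  Δ_mul : ∀ u v, Δ (mul u v) = TensorProduct.map₂ mul mul (Δ u) (Δ v)
  ε_mul : ∀ u v, ε (mul u v) = ε u * ε v
  Δ_ld : ∀ u v, Δ (ld u v) = TensorProduct.map₂ ld ld (Δ u) (Δ v)
  ε_ld : ∀ u v, ε (ld u v) = ε u * ε v
  Δ_rd : ∀ u v, Δ (rd u v) = TensorProduct.map₂ rd rd (Δ u) (Δ v)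
  ε_rd : ∀ u v, ε (rd u v) = ε u * ε v
  /-- Σ u₍₁₎\(u₍₂₎v) = ε(u)v -/
  ld_mul_cancel : ∀ u v, TensorProduct.lift ld ((LinearMap.lTensor A (mul.flip v)) (Δ u)) = ε u • v
  /-- Σ u₍₁₎(u₍₂₎\v) = ε(u)v -/
  mul_ld_cancel : ∀ u v, TensorProduct.lift mul ((LinearMap.lTensor A (ld.flip v)) (Δ u)) = ε u • v
  /-- Σ (vu₍₁₎)/u₍₂₎ = ε(u)v -/
  rd_mul_cancel : ∀ u v, TensorProduct.lift rd ((LinearMap.rTensor A (mul v)) (Δ u)) = ε u • v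
  /-- Σ (v/u₍₁₎)u₍₂₎ = ε(u)v -/
  mul_rd_cancel : ∀ u v, TensorProduct.lift mul ((LinearMap.rTensor A (rd v)) (Δ u)) = ε u • v

variable {A B : Type*} [AddCommGroup A] [Module k A] [AddCommGroup B] [Module k B]

/-- A morphism of unital bialgebras with divisions. -/
structure DivBialgHom (SA : DivBialg k A) (SB : DivBialg k B) (π : A →ₗ[k] B) : Prop where
  map_Δ : ∀ u, TensorProduct.map π π (SA.Δ u) = SB.Δ (π u)
  map_ε : ∀ u, SB.ε (π u) = SA.ε u
  map_mul : ∀ u v, π (SA.mul u v) = SB.mul (π u) (π v)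
  map_one : π SA.one = SB.one
  map_ld : ∀ u v, π (SA.ld u v) = SB.ld (π u) (π v)
  map_rd : ∀ u v, π (SA.rd u v) = SB.rd (π u) (π v)

/-- `D` is a subcoalgebra w.r.t. the comultiplication `Δ`: `Δ(D) ⊆ D ⊗ D`. -/
def IsSubcoalg {M : Type*} [AddCommGroup M] [Module k M] (Δ : M →ₗ[k] M ⊗[k] M)
    (D : Submodule k M) : Prop :=
  ∀ x ∈ D, Δ x ∈ LinearMap.range (TensorProduct.map D.subtype D.subtype)

/-- `F(A)`: the sum of all subcoalgebras `D ⊆ A` on which `π = ε(·) • 1`. -/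
def Fsub (SA : DivBialg k A) (oneB : B) (π : A →ₗ[k] B) : Submodule k A :=
  sSup {D : Submodule k A | IsSubcoalg k SA.Δ D ∧ ∀ x ∈ D, π x = SA.ε x • oneB}

end FormalLoops

namespace FormalLoops

variable (k : Type*) [Field k]
variable {A B : Type*} [AddCommGroup A] [Module k A] [AddCommGroup B] [Module k B]

/-- The comultiplication of the tensor-product coalgebra `A ⊗ A`. -/
noncomputable def tcomul (SA : DivBialg k A) :
    A ⊗[k] A →ₗ[k] (A ⊗[k] A) ⊗[k] (A ⊗[k] A) :=
  (TensorProduct.tensorTensorTensorComm k A A A A).toLinearMap ∘ₗ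
    TensorProduct.map SA.Δ SA.Δ

/-- The counit of the tensor-product coalgebra `A ⊗ A`. -/
noncomputable def tcounit (SA : DivBialg k A) : A ⊗[k] A →ₗ[k] k :=
  (TensorProduct.lid k k).toLinearMap ∘ₗ TensorProduct.map SA.ε SA.ε

/-- The linear map `A ⊗ A → B`, `u ⊗ v ↦ ε(v) π(u)`. -/
noncomputable def pbFst (SA : DivBialg k A) (π : A →ₗ[k] B) : A ⊗[k] A →ₗ[k] B :=
  (TensorProduct.rid k B).toLinearMap ∘ₗ TensorProduct.map π SA.ε

/-- The linear map `A ⊗ A → B`, `u ⊗ v ↦ ε(u) π(v)`. -/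
noncomputable def pbSnd (SA : DivBialg k A) (π : A →ₗ[k] B) : A ⊗[k] A →ₗ[k] B :=
  (TensorProduct.lid k B).toLinearMap ∘ₗ TensorProduct.map SA.ε π

/-- The pullback `A ⊗_B A`: the sum of all subcoalgebras of the tensor-product
coalgebra `A ⊗ A` on which `u ⊗ v ↦ ε(v)π(u)` and `u ⊗ v ↦ ε(u)π(v)` agree. -/
noncomputable def pbSub (SA : DivBialg k A) (π : A →ₗ[k] B) : Submodule k (A ⊗[k] A) :=
  sSup {C : Submodule k (A ⊗[k] A) | IsSubcoalg k (tcomul k SA) C ∧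
    ∀ t ∈ C, pbFst k SA π t = pbSnd k SA π t}

/-- The data of an abelian group `(π : A → B, ⊞, 0)` in the comma category over `B`:
a linear map `⊞ = bp : A ⊗_B A → A` which lies over `B`, is a coalgebra morphism
(witnessed by a corestriction `Δpb` of the comultiplication of `A ⊗ A` to `A ⊗_B A`),
is multiplicative, commutative, associative on `F(A)` and has `0 = z ∘ π` as unit. -/
structure BoxPlusData (SA : DivBialg k A) (SB : DivBialg k B)
    (π : A →ₗ[k] B) (z : B →ₗ[k] A) where
  bp : ↥(pbSub k SA π) →ₗ[k] A
  Δpb : ↥(pbSub k SA π) →ₗ[k] (↥(pbSub k SA π) ⊗[k] ↥(pbSub k SA π))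
  Δpb_compat : ∀ t : pbSub k SA π,
    TensorProduct.map (pbSub k SA π).subtype (pbSub k SA π).subtype (Δpb t)
      = tcomul k SA (t : A ⊗[k] A)
  π_bp : ∀ t : pbSub k SA π, π (bp t) = pbFst k SA π (t : A ⊗[k] A)
  Δ_bp : ∀ t : pbSub k SA π, SA.Δ (bp t) = TensorProduct.map bp bp (Δpb t)
  ε_bp : ∀ t : pbSub k SA π, SA.ε (bp t) = tcounit k SA (t : A ⊗[k] A)
  bp_mul : ∀ (t t' : pbSub k SA π)
      (h : TensorProduct.map₂ SA.mul SA.mul (t : A ⊗[k] A) (t' : A ⊗[k] A) ∈ pbSub k SA π),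
      bp ⟨TensorProduct.map₂ SA.mul SA.mul (t : A ⊗[k] A) (t' : A ⊗[k] A), h⟩
        = SA.mul (bp t) (bp t')
  bp_flip : ∀ (t : pbSub k SA π)
      (h : (TensorProduct.comm k A A) (t : A ⊗[k] A) ∈ pbSub k SA π),
      bp ⟨(TensorProduct.comm k A A) (t : A ⊗[k] A), h⟩ = bp t
  bp_assoc : ∀ x ∈ Fsub k SA SB.one π, ∀ y ∈ Fsub k SA SB.one π, ∀ w ∈ Fsub k SA SB.one π,
      ∀ (h1 : x ⊗ₜ[k] y ∈ pbSub k SA π) (h2 : y ⊗ₜ[k] w ∈ pbSub k SA π)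
        (h3 : (bp ⟨x ⊗ₜ[k] y, h1⟩) ⊗ₜ[k] w ∈ pbSub k SA π)
        (h4 : x ⊗ₜ[k] (bp ⟨y ⊗ₜ[k] w, h2⟩) ∈ pbSub k SA π),
      bp ⟨(bp ⟨x ⊗ₜ[k] y, h1⟩) ⊗ₜ[k] w, h3⟩ = bp ⟨x ⊗ₜ[k] (bp ⟨y ⊗ₜ[k] w, h2⟩), h4⟩
  bp_unit_right : ∀ (u : A)
      (h : (LinearMap.lTensor A (z ∘ₗ π)) (SA.Δ u) ∈ pbSub k SA π),
      bp ⟨(LinearMap.lTensor A (z ∘ₗ π)) (SA.Δ u), h⟩ = u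
  bp_unit_left : ∀ (u : A)
      (h : (LinearMap.rTensor A (z ∘ₗ π)) (SA.Δ u) ∈ pbSub k SA π),
      bp ⟨(LinearMap.rTensor A (z ∘ₗ π)) (SA.Δ u), h⟩ = u

end FormalLoops

/-!
Elements of `F(A)` lie over the unit of `B`, so `F(A) ⊗ F(A)` is a subcoalgebra of
`A ⊗_B A`, and the image of `F(A) ⊗ F(A)` under the multiplication or a division is again a
subcoalgebra lying over `1 · 1 = 1`, hence inside `F(A)`. On `F(A)` the unit axioms of `⊞`
read `x ⊞ 1 = x = 1 ⊞ x`, and since `⊞` is multiplicative, Eckmann–Hilton gives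
`x x' = (x ⊞ 1)(1 ⊞ x') = (x 1) ⊞ (1 x') = x ⊞ x'`. Commutativity and associativity of the
product on `F(A)` are then those of `⊞`.
-/

namespace FormalLoops

section TensorSquare

variable {R M M' N : Type*} [CommSemiring R] [AddCommMonoid M] [Module R M]
  [AddCommMonoid M'] [Module R M'] [AddCommMonoid N] [Module R N]

lemma map₂_map₂_mem_map₂_mk {g : M →ₗ[R] M' →ₗ[R] N} {D : Submodule R M}
    {D' : Submodule R M'} {E : Submodule R N} (hg : ∀ x ∈ D, ∀ y ∈ D', g x y ∈ E)
    {a : M ⊗[R] M} {b : M' ⊗[R] M'} (ha : a ∈ Submodule.map₂ (mk R M M) D D)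
    (hb : b ∈ Submodule.map₂ (mk R M' M') D' D') :
    map₂ g g a b ∈ Submodule.map₂ (mk R N N) E E := by
  suffices Submodule.map₂ (map₂ g g) (Submodule.map₂ (mk R M M) D D)
      (Submodule.map₂ (mk R M' M') D' D') ≤ Submodule.map₂ (mk R N N) E E from
    this (Submodule.apply_mem_map₂ _ ha hb)
  rw [Submodule.map₂_eq_span_image2 (mk R M M), Submodule.map₂_eq_span_image2 (mk R M' M'),
    Submodule.map₂_span_span, Submodule.span_le]
  rintro _ ⟨_, ⟨x, hx, y, hy, rfl⟩, _, ⟨x', hx', y', hy', rfl⟩, rfl⟩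
  exact Submodule.apply_mem_map₂ _ (hg x hx x' hx') (hg y hy y' hy')

end TensorSquare

variable {k : Type*} [Field k]

section Subcoalgebra

variable {M M' N : Type*} [AddCommGroup M] [Module k M] [AddCommGroup M'] [Module k M']
  [AddCommGroup N] [Module k N]

lemma isSubcoalg_iff {Δ : M →ₗ[k] M ⊗[k] M} {D : Submodule k M} :
    IsSubcoalg k Δ D ↔ ∀ x ∈ D, Δ x ∈ Submodule.map₂ (mk k M M) D D := by
  rw [IsSubcoalg, range_mapIncl]

lemma isSubcoalg_sSup {Δ : M →ₗ[k] M ⊗[k] M} {S : Set (Submodule k M)}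
    (hS : ∀ D ∈ S, IsSubcoalg k Δ D) : IsSubcoalg k Δ (sSup S) := by
  have : sSup S ≤ (LinearMap.range (mapIncl (sSup S) (sSup S))).comap Δ :=
    sSup_le fun D hD x hx => range_mapIncl_mono (le_sSup hD) (le_sSup hD) (hS D hD x hx)
  exact fun x hx => this hx

lemma IsSubcoalg.map₂ {ΔM : M →ₗ[k] M ⊗[k] M} {ΔM' : M' →ₗ[k] M' ⊗[k] M'}
    {ΔN : N →ₗ[k] N ⊗[k] N} (op : M →ₗ[k] M' →ₗ[k] N)
    (hop : ∀ u v, ΔN (op u v) = TensorProduct.map₂ op op (ΔM u) (ΔM' v))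
    {D : Submodule k M} {D' : Submodule k M'} (hD : IsSubcoalg k ΔM D)
    (hD' : IsSubcoalg k ΔM' D') : IsSubcoalg k ΔN (Submodule.map₂ op D D') := by
  rw [isSubcoalg_iff] at hD hD' ⊢
  have : Submodule.map₂ op D D' ≤
      (Submodule.map₂ (mk k N N) (Submodule.map₂ op D D') (Submodule.map₂ op D D')).comap ΔN :=
    Submodule.map₂_le.2 fun x hx y hy => by
      rw [Submodule.mem_comap, hop]
      exact map₂_map₂_mem_map₂_mk (fun _ hx _ hy => Submodule.apply_mem_map₂ _ hx hy)
        (hD x hx) (hD' y hy)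
  exact fun x hx => this hx

end Subcoalgebra

variable {A B : Type*} [AddCommGroup A] [Module k A] [AddCommGroup B] [Module k B]

lemma DivBialg.ld_one (S : DivBialg k A) (v : A) : S.ld S.one v = v := by
  simpa [S.Δ_one, S.ε_one, S.one_mul] using S.mul_ld_cancel S.one v

lemma DivBialg.rd_one (S : DivBialg k A) (v : A) : S.rd v S.one = v := by
  simpa [S.Δ_one, S.ε_one, S.mul_one] using S.mul_rd_cancel S.one v

section Fsub

variable {SA : DivBialg k A} {oneB : B} {π : A →ₗ[k] B}

lemma isSubcoalg_fsub : IsSubcoalg k SA.Δ (Fsub k SA oneB π) :=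
  isSubcoalg_sSup fun _ hD => hD.1

lemma map_eq_smul_of_mem_fsub {x : A} (hx : x ∈ Fsub k SA oneB π) : π x = SA.ε x • oneB :=
  (sSup_le fun _ hD => hD.2 : Fsub k SA oneB π ≤ π.eqLocus (SA.ε.smulRight oneB)) hx

lemma le_fsub {D : Submodule k A} (hD : IsSubcoalg k SA.Δ D)
    (hπD : D ≤ π.eqLocus (SA.ε.smulRight oneB)) : D ≤ Fsub k SA oneB π :=
  le_sSup ⟨hD, hπD⟩

lemma one_mem_fsub (hπ1 : π SA.one = oneB) : SA.one ∈ Fsub k SA oneB π := by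
  refine le_fsub (D := k ∙ SA.one) ?_ ?_ (Submodule.mem_span_singleton_self _)
  · rw [isSubcoalg_iff]
    intro x hx
    obtain ⟨c, rfl⟩ := Submodule.mem_span_singleton.1 hx
    rw [map_smul, SA.Δ_one]
    exact Submodule.smul_mem _ _ (Submodule.apply_mem_map₂ _
      (Submodule.mem_span_singleton_self _) (Submodule.mem_span_singleton_self _))
  · intro x hx
    obtain ⟨c, rfl⟩ := Submodule.mem_span_singleton.1 hx
    simp [hπ1, SA.ε_one]

lemma map₂_mem_fsub (op : A →ₗ[k] A →ₗ[k] A) (opB : B →ₗ[k] B →ₗ[k] B)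
    (hΔ : ∀ u v, SA.Δ (op u v) = TensorProduct.map₂ op op (SA.Δ u) (SA.Δ v))
    (hε : ∀ u v, SA.ε (op u v) = SA.ε u * SA.ε v)
    (hπ : ∀ u v, π (op u v) = opB (π u) (π v)) (hone : opB oneB oneB = oneB)
    {x y : A} (hx : x ∈ Fsub k SA oneB π) (hy : y ∈ Fsub k SA oneB π) :
    op x y ∈ Fsub k SA oneB π := by
  refine le_fsub (isSubcoalg_fsub.map₂ op hΔ isSubcoalg_fsub)
    (Submodule.map₂_le.2 fun u hu v hv => ?_) (Submodule.apply_mem_map₂ _ hx hy)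
  simp [LinearMap.mem_eqLocus, hπ, hε, map_eq_smul_of_mem_fsub hu,
    map_eq_smul_of_mem_fsub hv, hone, smul_smul, mul_comm]

/-- On `F(A)` the second tensor factor of `Δ u` only enters through `π = ε(·) • 1`. -/
lemma lTensor_map_Δ_of_mem_fsub {z : B →ₗ[k] A} (hz1 : z oneB = SA.one) {u : A}
    (hu : u ∈ Fsub k SA oneB π) : (z ∘ₗ π).lTensor A (SA.Δ u) = u ⊗ₜ[k] SA.one := by
  obtain ⟨t, ht⟩ := isSubcoalg_fsub u hu
  have key : (z ∘ₗ π).lTensor A ∘ₗ mapIncl (Fsub k SA oneB π) (Fsub k SA oneB π) =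
      (mk k A A).flip SA.one ∘ₗ (TensorProduct.rid k A).toLinearMap ∘ₗ SA.ε.lTensor A ∘ₗ
        mapIncl (Fsub k SA oneB π) (Fsub k SA oneB π) :=
    TensorProduct.ext' fun x y => by
      simp [map_eq_smul_of_mem_fsub y.2, hz1, TensorProduct.smul_tmul']
  rw [← ht, ← LinearMap.comp_apply, key]
  simp only [LinearMap.comp_apply, ht, LinearEquiv.coe_coe, SA.counit_right,
    LinearMap.flip_apply, mk_apply]

lemma rTensor_map_Δ_of_mem_fsub {z : B →ₗ[k] A} (hz1 : z oneB = SA.one) {u : A}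
    (hu : u ∈ Fsub k SA oneB π) : (z ∘ₗ π).rTensor A (SA.Δ u) = SA.one ⊗ₜ[k] u := by
  obtain ⟨t, ht⟩ := isSubcoalg_fsub u hu
  have key : (z ∘ₗ π).rTensor A ∘ₗ mapIncl (Fsub k SA oneB π) (Fsub k SA oneB π) =
      mk k A A SA.one ∘ₗ (TensorProduct.lid k A).toLinearMap ∘ₗ SA.ε.rTensor A ∘ₗ
        mapIncl (Fsub k SA oneB π) (Fsub k SA oneB π) :=
    TensorProduct.ext' fun x y => by
      simp [map_eq_smul_of_mem_fsub x.2, hz1, TensorProduct.smul_tmul']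
  rw [← ht, ← LinearMap.comp_apply, key]
  simp only [LinearMap.comp_apply, ht, LinearEquiv.coe_coe, SA.counit_left, mk_apply]

end Fsub

section Pullback

variable {SA : DivBialg k A} {π : A →ₗ[k] B}

lemma tcomul_tmul (u v : A) :
    tcomul k SA (u ⊗ₜ[k] v) = TensorProduct.map₂ (mk k A A) (mk k A A) (SA.Δ u) (SA.Δ v) := by
  rw [tcomul, LinearMap.comp_apply, map_tmul]
  induction SA.Δ u using TensorProduct.induction_on with
  | zero => simp
  | add a b ha hb => simp only [add_tmul, map_add, ha, hb, LinearMap.add_apply]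
  | tmul a b =>
    induction SA.Δ v using TensorProduct.induction_on with
    | zero => simp
    | add c d hc hd => simp only [tmul_add, map_add, hc, hd]
    | tmul c d => simp

lemma le_pbSub {C : Submodule k (A ⊗[k] A)} (hC : IsSubcoalg k (tcomul k SA) C)
    (hπC : C ≤ (pbFst k SA π).eqLocus (pbSnd k SA π)) : C ≤ pbSub k SA π :=
  le_sSup ⟨hC, hπC⟩

lemma tmul_mem_pbSub {oneB : B} {x y : A} (hx : x ∈ Fsub k SA oneB π)
    (hy : y ∈ Fsub k SA oneB π) : x ⊗ₜ[k] y ∈ pbSub k SA π := by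
  refine le_pbSub (isSubcoalg_fsub.map₂ (mk k A A) tcomul_tmul isSubcoalg_fsub)
    (Submodule.map₂_le.2 fun u hu v hv => ?_) (Submodule.apply_mem_map₂ _ hx hy)
  simp [LinearMap.mem_eqLocus, pbFst, pbSnd, map_eq_smul_of_mem_fsub hu,
    map_eq_smul_of_mem_fsub hv, smul_smul, mul_comm]

end Pullback

section Closure

variable {SA : DivBialg k A} {SB : DivBialg k B} {π : A →ₗ[k] B} {x y : A}

lemma mul_mem_fsub (hπ : DivBialgHom k SA SB π) (hx : x ∈ Fsub k SA SB.one π)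
    (hy : y ∈ Fsub k SA SB.one π) : SA.mul x y ∈ Fsub k SA SB.one π :=
  map₂_mem_fsub _ _ SA.Δ_mul SA.ε_mul hπ.map_mul (SB.mul_one _) hx hy

lemma ld_mem_fsub (hπ : DivBialgHom k SA SB π) (hx : x ∈ Fsub k SA SB.one π)
    (hy : y ∈ Fsub k SA SB.one π) : SA.ld x y ∈ Fsub k SA SB.one π :=
  map₂_mem_fsub _ _ SA.Δ_ld SA.ε_ld hπ.map_ld (SB.ld_one _) hx hy

lemma rd_mem_fsub (hπ : DivBialgHom k SA SB π) (hx : x ∈ Fsub k SA SB.one π)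
    (hy : y ∈ Fsub k SA SB.one π) : SA.rd x y ∈ Fsub k SA SB.one π :=
  map₂_mem_fsub _ _ SA.Δ_rd SA.ε_rd hπ.map_rd (SB.rd_one _) hx hy

end Closure

namespace BoxPlusData

variable {SA : DivBialg k A} {SB : DivBialg k B} {π : A →ₗ[k] B} {z : B →ₗ[k] A}
  (P : BoxPlusData k SA SB π z)

lemma bp_congr {t t' : A ⊗[k] A} (e : t = t') (h : t ∈ pbSub k SA π)
    (h' : t' ∈ pbSub k SA π) : P.bp ⟨t, h⟩ = P.bp ⟨t', h'⟩ := by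
  subst e; rfl

lemma bp_tmul_one (hz1 : z SB.one = SA.one) {u : A} (hu : u ∈ Fsub k SA SB.one π)
    (h : u ⊗ₜ[k] SA.one ∈ pbSub k SA π) : P.bp ⟨u ⊗ₜ[k] SA.one, h⟩ = u := by
  have e := lTensor_map_Δ_of_mem_fsub hz1 hu
  exact (P.bp_congr e.symm h _).trans (P.bp_unit_right u (e ▸ h))

lemma bp_one_tmul (hz1 : z SB.one = SA.one) {u : A} (hu : u ∈ Fsub k SA SB.one π)
    (h : SA.one ⊗ₜ[k] u ∈ pbSub k SA π) : P.bp ⟨SA.one ⊗ₜ[k] u, h⟩ = u := by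
  have e := rTensor_map_Δ_of_mem_fsub hz1 hu
  exact (P.bp_congr e.symm h _).trans (P.bp_unit_left u (e ▸ h))

lemma mul_eq_bp (hπ1 : π SA.one = SB.one) (hz1 : z SB.one = SA.one) {x y : A}
    (hx : x ∈ Fsub k SA SB.one π) (hy : y ∈ Fsub k SA SB.one π)
    (h : x ⊗ₜ[k] y ∈ pbSub k SA π) : SA.mul x y = P.bp ⟨x ⊗ₜ[k] y, h⟩ := by
  have h1 : x ⊗ₜ[k] SA.one ∈ pbSub k SA π := tmul_mem_pbSub hx (one_mem_fsub hπ1)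
  have h2 : SA.one ⊗ₜ[k] y ∈ pbSub k SA π := tmul_mem_pbSub (one_mem_fsub hπ1) hy
  have e : TensorProduct.map₂ SA.mul SA.mul (x ⊗ₜ[k] SA.one) (SA.one ⊗ₜ[k] y) = x ⊗ₜ[k] y := by
    rw [map₂_apply_tmul, map_tmul, SA.mul_one, SA.one_mul]
  calc SA.mul x y = SA.mul (P.bp ⟨_, h1⟩) (P.bp ⟨_, h2⟩) := by
        rw [P.bp_tmul_one hz1 hx, P.bp_one_tmul hz1 hy]
    _ = P.bp ⟨_, e ▸ h⟩ := (P.bp_mul ⟨_, h1⟩ ⟨_, h2⟩ (e ▸ h)).symm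
    _ = P.bp ⟨x ⊗ₜ[k] y, h⟩ := P.bp_congr e _ h

lemma mul_comm_of_mem_fsub (P : BoxPlusData k SA SB π z) (hπ1 : π SA.one = SB.one)
    (hz1 : z SB.one = SA.one) {x y : A} (hx : x ∈ Fsub k SA SB.one π)
    (hy : y ∈ Fsub k SA SB.one π) : SA.mul x y = SA.mul y x := by
  have hxy := tmul_mem_pbSub hx hy
  have hyx := tmul_mem_pbSub hy hx
  have e : TensorProduct.comm k A A (y ⊗ₜ[k] x) = x ⊗ₜ[k] y := comm_tmul k A A y x
  calc SA.mul x y = P.bp ⟨_, hxy⟩ := P.mul_eq_bp hπ1 hz1 hx hy _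
    _ = P.bp ⟨_, e ▸ hxy⟩ := P.bp_congr e.symm _ _
    _ = P.bp ⟨y ⊗ₜ[k] x, hyx⟩ := P.bp_flip ⟨_, hyx⟩ _
    _ = SA.mul y x := (P.mul_eq_bp hπ1 hz1 hy hx _).symm

lemma mul_assoc_of_mem_fsub (P : BoxPlusData k SA SB π z) (hπ : DivBialgHom k SA SB π)
    (hz1 : z SB.one = SA.one) {x y w : A} (hx : x ∈ Fsub k SA SB.one π)
    (hy : y ∈ Fsub k SA SB.one π) (hw : w ∈ Fsub k SA SB.one π) :
    SA.mul (SA.mul x y) w = SA.mul x (SA.mul y w) := by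
  have hxy := mul_mem_fsub hπ hx hy
  have hyw := mul_mem_fsub hπ hy hw
  have e1 := P.mul_eq_bp hπ.map_one hz1 hx hy (tmul_mem_pbSub hx hy)
  have e2 := P.mul_eq_bp hπ.map_one hz1 hy hw (tmul_mem_pbSub hy hw)
  calc SA.mul (SA.mul x y) w = P.bp ⟨_, tmul_mem_pbSub hxy hw⟩ :=
        P.mul_eq_bp hπ.map_one hz1 hxy hw _
    _ = P.bp ⟨_, e1 ▸ tmul_mem_pbSub hxy hw⟩ := P.bp_congr (by rw [e1]) _ _
    _ = P.bp ⟨_, e2 ▸ tmul_mem_pbSub hx hyw⟩ := P.bp_assoc x hx y hy w hw _ _ _ _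
    _ = P.bp ⟨_, tmul_mem_pbSub hx hyw⟩ := P.bp_congr (by rw [e2]) _ _
    _ = SA.mul x (SA.mul y w) := (P.mul_eq_bp hπ.map_one hz1 hx hyw _).symm

end BoxPlusData

end FormalLoops

open FormalLoops in
theorem fsub_mul_eq_boxplus_general
    (k : Type*) [Field k]
    {A B : Type*} [AddCommGroup A] [Module k A] [AddCommGroup B] [Module k B]
    (SA : DivBialg k A) (SB : DivBialg k B)
    (π : A →ₗ[k] B) (z : B →ₗ[k] A)
    (hπ : DivBialgHom k SA SB π) (hz : DivBialgHom k SB SA z)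
    (P : BoxPlusData k SA SB π z)
    (F : Submodule k A) (hF : F = Fsub k SA SB.one π) :
    (∀ x ∈ F, ∀ x' ∈ F,
        ∃ h : x ⊗ₜ[k] x' ∈ pbSub k SA π, SA.mul x x' = P.bp ⟨x ⊗ₜ[k] x', h⟩) ∧
    (∀ x ∈ F, ∀ x' ∈ F, SA.mul x x' ∈ F ∧ SA.ld x x' ∈ F ∧ SA.rd x x' ∈ F) ∧
    (∀ x ∈ F, ∀ x' ∈ F, SA.mul x x' = SA.mul x' x) ∧
    (∀ x ∈ F, ∀ y ∈ F, ∀ w ∈ F, SA.mul (SA.mul x y) w = SA.mul x (SA.mul y w)) := by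
  subst hF
  refine ⟨fun x hx y hy => ⟨tmul_mem_pbSub hx hy, P.mul_eq_bp hπ.map_one hz.map_one hx hy _⟩,
    fun x hx y hy => ⟨mul_mem_fsub hπ hx hy, ld_mem_fsub hπ hx hy, rd_mem_fsub hπ hx hy⟩,
    fun x hx y hy => P.mul_comm_of_mem_fsub hπ.map_one hz.map_one hx hy,
    fun x hx y hy w hw => P.mul_assoc_of_mem_fsub hπ hz.map_one hx hy hw⟩

open FormalLoops in
/-- for `x, x' ∈ F(A)`, `x ⊗ x'` lies in `A ⊗_B A` and `x·x' = ⊞(x ⊗ x')`;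
`F(A)` is closed under the multiplication and both divisions, and the multiplication
of `A` restricted to `F(A)` is commutative and associative. -/
theorem fsub_mul_eq_boxplus
    (k : Type*) [Field k] [CharZero k]
    {A B : Type*} [AddCommGroup A] [Module k A] [AddCommGroup B] [Module k B]
    (SA : DivBialg k A) (SB : DivBialg k B)
    (π : A →ₗ[k] B) (z : B →ₗ[k] A)
    (hπ : DivBialgHom k SA SB π) (hz : DivBialgHom k SB SA z)
    (hsec : π ∘ₗ z = LinearMap.id)
    (P : BoxPlusData k SA SB π z)
    (F : Submodule k A) (hF : F = Fsub k SA SB.one π) :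
    (∀ x ∈ F, ∀ x' ∈ F,
        ∃ h : x ⊗ₜ[k] x' ∈ pbSub k SA π, SA.mul x x' = P.bp ⟨x ⊗ₜ[k] x', h⟩) ∧
    (∀ x ∈ F, ∀ x' ∈ F, SA.mul x x' ∈ F ∧ SA.ld x x' ∈ F ∧ SA.rd x x' ∈ F) ∧
    (∀ x ∈ F, ∀ x' ∈ F, SA.mul x x' = SA.mul x' x) ∧
    (∀ x ∈ F, ∀ y ∈ F, ∀ w ∈ F, SA.mul (SA.mul x y) w = SA.mul x (SA.mul y w)) :=
  fsub_mul_eq_boxplus_general k SA SB π z hπ hz P F hF
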